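/- arXiv:2601.10111 — 6 statements merged into one kernel-verified Lean document; each statement's English description precedes it below -/
import Mathlib

section
/- Let t ≥ 1 be a natural number, p a real number with 0 < p < 1, and k a natural number with t·p ≤ k + 1 and k + 1 < t. Then the binomial upper tail satisfies ∑_{j=k+1}^{t} (t choose j) · p^j · (1−p)^{t−j} ≤ exp(−t · D((k+1)/t ‖ p)). -/
/-!
Chernoff's bound by exponential tilting: for `r ≥ 1` the tail indicator of `j ≥ m` is at most
`r ^ (j - m)`, so the tail is at most `(p r + 1 - p) ^ t / r ^ m` by the binomial theorem. The
optimal tilt `r = a (1 - p) / ((1 - a) p)` with `a = m / t` turns this bound into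
`exp (-t D(a ‖ p))`, and `r ≥ 1` is exactly the hypothesis `p ≤ a`.
-/

/-- Kullback–Leibler divergence of Bernoulli distributions. -/
noncomputable def klBern (a p : ℝ) : ℝ :=
  a * Real.log (a / p) + (1 - a) * Real.log ((1 - a) / (1 - p))

open Finset

theorem binomial_tail_le_div_pow (t m : ℕ) {p r : ℝ} (hp0 : 0 ≤ p) (hp1 : p ≤ 1) (hr : 1 ≤ r) :
    ∑ j ∈ Icc m t, (t.choose j : ℝ) * p ^ j * (1 - p) ^ (t - j)
      ≤ (p * r + (1 - p)) ^ t / r ^ m := by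
  have hq : 0 ≤ 1 - p := sub_nonneg.mpr hp1
  have hrm : 0 < r ^ m := by positivity
  calc ∑ j ∈ Icc m t, (t.choose j : ℝ) * p ^ j * (1 - p) ^ (t - j)
      ≤ ∑ j ∈ Icc m t, (p * r) ^ j * (1 - p) ^ (t - j) * t.choose j / r ^ m := by
        refine sum_le_sum fun j hj => (le_div_iff₀ hrm).mpr ?_
        calc (t.choose j : ℝ) * p ^ j * (1 - p) ^ (t - j) * r ^ m
            ≤ (t.choose j : ℝ) * p ^ j * (1 - p) ^ (t - j) * r ^ j :=
              mul_le_mul_of_nonneg_left (pow_le_pow_right₀ hr (mem_Icc.mp hj).1) (by positivity)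
          _ = (p * r) ^ j * (1 - p) ^ (t - j) * t.choose j := by ring
    _ ≤ ∑ j ∈ range (t + 1), (p * r) ^ j * (1 - p) ^ (t - j) * t.choose j / r ^ m := by
        refine sum_le_sum_of_subset_of_nonneg (fun j hj => ?_) fun j _ _ => by positivity
        simp only [mem_Icc, mem_range] at hj ⊢
        omega
    _ = (p * r + (1 - p)) ^ t / r ^ m := by rw [add_pow, sum_div]

theorem one_le_optimal_tilt {a p : ℝ} (hp0 : 0 < p) (ha1 : a < 1) (hpa : p ≤ a) :
    1 ≤ a * (1 - p) / ((1 - a) * p) := by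
  rw [le_div_iff₀ (by nlinarith)]
  nlinarith

theorem optimal_tilt_bound_eq_exp_neg_klBern (t m : ℕ) {a p : ℝ} (hp0 : 0 < p) (hp1 : p < 1)
    (ha0 : 0 < a) (ha1 : a < 1) (hta : (t : ℝ) * a = m) :
    let r := a * (1 - p) / ((1 - a) * p)
    (p * r + (1 - p)) ^ t / r ^ m = Real.exp (-(t : ℝ) * klBern a p) := by
  intro r
  have hq : 0 < 1 - p := sub_pos.mpr hp1
  have hb : 0 < 1 - a := sub_pos.mpr ha1
  have hr : 0 < r := by positivity
  have hsum : p * r + (1 - p) = (1 - p) / (1 - a) := by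
    simp only [r]
    field_simp
    ring
  rw [← Real.exp_log (by positivity : 0 < (p * r + (1 - p)) ^ t / r ^ m), hsum]
  congr 1
  simp only [r, klBern]
  rw [Real.log_div (by positivity) (by positivity), Real.log_pow, Real.log_pow,
    Real.log_div hq.ne' hb.ne', Real.log_div (by positivity) (by positivity),
    Real.log_mul ha0.ne' hq.ne', Real.log_mul hb.ne' hp0.ne', Real.log_div ha0.ne' hp0.ne',
    Real.log_div hb.ne' hq.ne', ← hta]
  ring

theorem stmt_0_general (t k : ℕ) (p : ℝ) (hp0 : 0 < p) (hp1 : p < 1)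
    (hk1 : (t : ℝ) * p ≤ (k : ℝ) + 1) (hk2 : k + 1 < t) :
    ∑ j ∈ Finset.Icc (k + 1) t, (t.choose j : ℝ) * p ^ j * (1 - p) ^ (t - j)
      ≤ Real.exp (-(t : ℝ) * klBern (((k : ℝ) + 1) / (t : ℝ)) p) := by
  set a : ℝ := ((k : ℝ) + 1) / t
  have ht0 : (0 : ℝ) < t := Nat.cast_pos.mpr (k.succ_pos.trans hk2)
  have hta : (t : ℝ) * a = (k + 1 : ℕ) := by push_cast; simp only [a]; field_simp
  have ha1 : a < 1 := (div_lt_one ht0).mpr (by exact_mod_cast hk2)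
  have hpa : p ≤ a := (le_div_iff₀ ht0).mpr (by linarith)
  calc _ ≤ _ := binomial_tail_le_div_pow t (k + 1) hp0.le hp1.le (one_le_optimal_tilt hp0 ha1 hpa)
    _ = _ := optimal_tilt_bound_eq_exp_neg_klBern t (k + 1) hp0 hp1 (by positivity) ha1 hta

theorem stmt_0 (t k : ℕ) (p : ℝ) (ht : 1 ≤ t) (hp0 : 0 < p) (hp1 : p < 1)
    (hk1 : (t : ℝ) * p ≤ (k : ℝ) + 1) (hk2 : k + 1 < t) :
    ∑ j ∈ Finset.Icc (k + 1) t, (t.choose j : ℝ) * p ^ j * (1 - p) ^ (t - j)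
      ≤ Real.exp (-(t : ℝ) * klBern (((k : ℝ) + 1) / (t : ℝ)) p) :=
  stmt_0_general t k p hp0 hp1 hk1 hk2
end

section
/- Let m ≥ 1 and 0 ≤ l ≤ m be natural numbers, let c be a real number, and let 𝒮 denote the (finite) set of all ZMod 2–submodules of (ZMod 2)^m of rank l. Then ( ∑_{L ∈ 𝒮} ∑_{x ∈ L} c^{wt(x)} ) · (2^m − 1) = |𝒮| · ( (2^m − 1) + (2^l − 1) · ((1 + c)^m − 1) ). Equivalently, the average over uniformly random l-dimensional subspaces L of Z(L) := ∑_{x ∈ L} c^{wt(x)} equals 1 + ((2^l − 1)/(2^m − 1)) · ((1+c)^m − 1). -/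
open scoped Classical

/-- Hamming weight of a vector over `ZMod 2`. -/
def wt {m : ℕ} (x : Fin m → ZMod 2) : ℕ :=
  (Finset.univ.filter fun i => x i ≠ 0).card

noncomputable instance (m : ℕ) : Fintype (Submodule (ZMod 2) (Fin m → ZMod 2)) :=
  Fintype.ofInjective (fun L => (L : Set (Fin m → ZMod 2))) SetLike.coe_injective

/-!
Double count the pairs `(L, x)` with `x ∈ L`. The linear automorphisms of `V` act transitively
on nonzero vectors and preserve dimension, so every `x ≠ 0` lies in the same number `k` of
`l`-dimensional subspaces; counting the pairs with `x ≠ 0` gives `k (2^m - 1) = |𝒮| (2^l - 1)`.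
Hence `∑_L ∑_{x ∈ L} c^wt(x) = |𝒮| + k ∑_{x ≠ 0} c^wt(x) = |𝒮| + k ((1 + c)^m - 1)`.
-/

section

variable {K V : Type*} [Field K] [AddCommGroup V] [Module K V]

theorem exists_linearEquiv_apply_eq_of_ne_zero {x y : V} (hx : x ≠ 0) (hy : y ≠ 0) :
    ∃ g : V ≃ₗ[K] V, g x = y := by
  let f := (LinearEquiv.toSpanNonzeroSingleton K V x hx).symm ≪≫ₗ
    LinearEquiv.toSpanNonzeroSingleton K V y hy
  obtain ⟨g, hg⟩ := Submodule.exists_linearEquiv_restrict_eq f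
  refine ⟨g, ?_⟩
  rw [← hg ⟨x, Submodule.mem_span_singleton_self x⟩]
  simp [f, LinearEquiv.coord_self]

theorem card_filter_ne_zero_mem [Fintype K] [Fintype V] (L : Submodule K V) :
    (({0}ᶜ : Finset V).filter (· ∈ L)).card = Fintype.card K ^ Module.finrank K L - 1 := by
  rw [← Module.card_eq_pow_finrank, Fintype.card_subtype, Finset.compl_singleton,
    Finset.filter_erase, Finset.card_erase_of_mem (by simp)]

variable (K V) [Fintype (Submodule K V)]

noncomputable def subspacesOfFinrank (l : ℕ) : Finset (Submodule K V) :=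
  Finset.univ.filter fun L => Module.finrank K L = l

variable {K V}

theorem card_filter_apply_mem_eq (l : ℕ) (g : V ≃ₗ[K] V) (x : V) :
    ((subspacesOfFinrank K V l).filter (g x ∈ ·)).card
      = ((subspacesOfFinrank K V l).filter (x ∈ ·)).card := by
  refine Finset.card_nbij' (Submodule.map (g.symm : V →ₗ[K] V)) (Submodule.map (g : V →ₗ[K] V))
    ?_ ?_ ?_ ?_
  all_goals intro L; simp [subspacesOfFinrank, LinearEquiv.finrank_map_eq, ← Submodule.map_comp]

theorem card_filter_mem_eq_of_ne_zero (l : ℕ) {x y : V} (hx : x ≠ 0) (hy : y ≠ 0) :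
    ((subspacesOfFinrank K V l).filter (x ∈ ·)).card
      = ((subspacesOfFinrank K V l).filter (y ∈ ·)).card := by
  obtain ⟨g, rfl⟩ := exists_linearEquiv_apply_eq_of_ne_zero (K := K) hx hy
  exact (card_filter_apply_mem_eq l g x).symm

variable [Fintype V]

theorem card_filter_mem_mul_of_ne_zero [Fintype K] (l : ℕ) {x : V} (hx : x ≠ 0) :
    ((subspacesOfFinrank K V l).filter (x ∈ ·)).card * (Fintype.card V - 1)
      = (subspacesOfFinrank K V l).card * (Fintype.card K ^ l - 1) := by
  calc ((subspacesOfFinrank K V l).filter (x ∈ ·)).card * (Fintype.card V - 1)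
      = ∑ y ∈ ({0}ᶜ : Finset V), ((subspacesOfFinrank K V l).filter (y ∈ ·)).card := by
        rw [Finset.sum_congr rfl fun y hy =>
          card_filter_mem_eq_of_ne_zero l (by simpa using hy) hx]
        rw [Finset.sum_const, Finset.card_compl, Finset.card_singleton, smul_eq_mul, mul_comm]
    _ = ∑ L ∈ subspacesOfFinrank K V l, (({0}ᶜ : Finset V).filter (· ∈ L)).card :=
        Finset.sum_card_bipartiteAbove_eq_sum_card_bipartiteBelow _
    _ = (subspacesOfFinrank K V l).card * (Fintype.card K ^ l - 1) := by
        rw [Finset.card_eq_sum_ones, Finset.sum_mul]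
        refine Finset.sum_congr rfl fun L hL => ?_
        rw [card_filter_ne_zero_mem, (Finset.mem_filter.1 hL).2, one_mul]

variable {R : Type*} [CommRing R]

theorem sum_sum_subspacesOfFinrank (l : ℕ) (f : V → R) :
    ∑ L ∈ subspacesOfFinrank K V l, ∑ x : L, f x
      = ∑ x, (((subspacesOfFinrank K V l).filter (x ∈ ·)).card : R) * f x := by
  calc ∑ L ∈ subspacesOfFinrank K V l, ∑ x : L, f x
      = ∑ L ∈ subspacesOfFinrank K V l, ∑ x ∈ Finset.univ.filter (· ∈ L), f x :=
        Finset.sum_congr rfl fun L _ => (Finset.sum_subtype _ (by simp) f).symm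
    _ = ∑ x, ∑ L ∈ (subspacesOfFinrank K V l).filter (x ∈ ·), f x :=
        Finset.sum_sum_bipartiteAbove_eq_sum_sum_bipartiteBelow _ fun _ x => f x
    _ = ∑ x, (((subspacesOfFinrank K V l).filter (x ∈ ·)).card : R) * f x := by
        simp only [Finset.sum_const, nsmul_eq_mul]

theorem sum_sum_subspacesOfFinrank_mul [Fintype K] [DecidableEq V] (l : ℕ) (f : V → R) :
    (∑ L ∈ subspacesOfFinrank K V l, ∑ x : L, f x) * ((Fintype.card V : R) - 1)
      = (subspacesOfFinrank K V l).card * (((Fintype.card V : R) - 1) * f 0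
          + ((Fintype.card K : R) ^ l - 1) * ∑ x ∈ ({0}ᶜ : Finset V), f x) := by
  have count_zero : (subspacesOfFinrank K V l).filter (0 ∈ ·) = subspacesOfFinrank K V l :=
    Finset.filter_true_of_mem fun L _ => L.zero_mem
  have count_ne_zero : ∀ x ∈ ({0}ᶜ : Finset V),
      (((subspacesOfFinrank K V l).filter (x ∈ ·)).card : R) * ((Fintype.card V : R) - 1)
        = (subspacesOfFinrank K V l).card * ((Fintype.card K : R) ^ l - 1) := by
    intro x hx
    have := congrArg (Nat.cast (R := R))
      (card_filter_mem_mul_of_ne_zero (K := K) l (x := x) (by simpa using hx))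
    rwa [Nat.cast_mul, Nat.cast_mul, Nat.cast_sub (Fintype.card_pos (α := V)),
      Nat.cast_sub (Nat.one_le_pow _ _ (Fintype.card_pos (α := K))), Nat.cast_pow,
      Nat.cast_one] at this
  rw [sum_sum_subspacesOfFinrank, Fintype.sum_eq_add_sum_compl 0, count_zero, add_mul,
    Finset.sum_mul, Finset.sum_congr rfl fun x hx => by rw [mul_right_comm, count_ne_zero x hx],
    ← Finset.mul_sum]
  ring

end

theorem sum_pow_wt {R : Type*} [CommSemiring R] (m : ℕ) (c : R) :
    ∑ x : Fin m → ZMod 2, c ^ wt x = (1 + c) ^ m := by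
  have hwt : ∀ x : Fin m → ZMod 2, c ^ wt x = ∏ i, if x i ≠ 0 then c else 1 := fun x => by
    rw [wt, ← Finset.prod_const, Finset.prod_filter]
  have hsum : ∑ a : ZMod 2, (if a ≠ 0 then c else 1) = 1 + c := by
    simp [Finset.sum_ite, Finset.filter_eq', Finset.filter_ne']
  simp_rw [hwt, ← Fintype.prod_sum (fun _ (a : ZMod 2) => if a ≠ 0 then c else 1), hsum,
    Finset.prod_const, Finset.card_univ, Fintype.card_fin]

theorem stmt_3_general (m l : ℕ) (c : ℝ) :
    (∑ L ∈ Finset.univ.filter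
        (fun L : Submodule (ZMod 2) (Fin m → ZMod 2) => Module.finrank (ZMod 2) L = l),
        ∑ x : L, c ^ wt (x : Fin m → ZMod 2)) * ((2 : ℝ) ^ m - 1)
      = ((Finset.univ.filter
          (fun L : Submodule (ZMod 2) (Fin m → ZMod 2) =>
            Module.finrank (ZMod 2) L = l)).card : ℝ)
        * (((2 : ℝ) ^ m - 1) + ((2 : ℝ) ^ l - 1) * ((1 + c) ^ m - 1)) := by
  have hwt_zero : wt (0 : Fin m → ZMod 2) = 0 := by simp [wt]
  have hsum_ne_zero : ∑ x ∈ ({0}ᶜ : Finset (Fin m → ZMod 2)), c ^ wt x = (1 + c) ^ m - 1 := by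
    rw [← sum_pow_wt m c, Fintype.sum_eq_add_sum_compl 0, hwt_zero, pow_zero, add_sub_cancel_left]
  have h := sum_sum_subspacesOfFinrank_mul (K := ZMod 2) l fun x : Fin m → ZMod 2 => c ^ wt x
  rw [hsum_ne_zero, hwt_zero, pow_zero, mul_one] at h
  simp only [Fintype.card_fun, Fintype.card_fin, ZMod.card, Nat.cast_pow, Nat.cast_ofNat] at h
  exact h

theorem stmt_3 (m l : ℕ) (hm : 1 ≤ m) (hl : l ≤ m) (c : ℝ) :
    (∑ L ∈ Finset.univ.filter
        (fun L : Submodule (ZMod 2) (Fin m → ZMod 2) => Module.finrank (ZMod 2) L = l),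
        ∑ x : L, c ^ wt (x : Fin m → ZMod 2)) * ((2 : ℝ) ^ m - 1)
      = ((Finset.univ.filter
          (fun L : Submodule (ZMod 2) (Fin m → ZMod 2) =>
            Module.finrank (ZMod 2) L = l)).card : ℝ)
        * (((2 : ℝ) ^ m - 1) + ((2 : ℝ) ^ l - 1) * ((1 + c) ^ m - 1)) :=
  stmt_3_general m l c
end

section
/- Let 0 < p < 1 and set N := 2p² − 2p + 1, M := (3p² − 2p + 1)/(4N), ν := √(N/(3p² − 2p + 1)). In the real inner product space of functions (Fin 4 → Fin 2) → ℝ with the standard dot product, let e_s denote the standard basis vector at the string s, and define, for each sign ε ∈ {+1, −1}: φ_ε := ((1−p)/√N)·e_{0000} + (ε·p/√(2N))·(e_{0011} + e_{1100}); φ_ε⁰ := ((1−p)/(2√(N·M)))·e_{0000} + (ε·p/√(2·N·M))·e_{0011}; φ_ε¹ := ((1−p)/(2√(N·M)))·e_{0000} + (ε·p/√(2·N·M))·e_{1100}. Then for each ε: (i) φ_ε = √M · (φ_ε⁰ + φ_ε¹); (ii) ‖φ_ε‖ = ‖φ_ε⁰‖ = ‖φ_ε¹‖ = 1; (iii) ⟪φ_ε⁰,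 φ_ε¹⟫ = 2ν² − 1; and (iv) ⟪φ_ε, φ_ε⁰⟫ = ⟪φ_ε, φ_ε¹⟫ = ν. Moreover √M = 1/(2ν). -/
/-!
Put `a = (1 - p)/√N` and `b = ε p/√(2N)`, so that `φ_ε = a e₀ + b (e₁ + e₂)` for the orthonormal
triple `e₀ = e_{0000}`, `e₁ = e_{0011}`, `e₂ = e_{1100}`, and `a² + 2b² = 1` because
`(1 - p)² + p² = N`. The Gaussian states are the normalized branches `((a/2) e₀ + b e₁)/√M` and
`((a/2) e₀ + b e₂)/√M`, where `M = a²/4 + b² = 1/4 + b²/2` is the squared norm of each branch.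
Every claim is then an inner product in the orthonormal triple, and `ν = 1/(2√M)` because
`ν² = N/(3p² - 2p + 1) = 1/(4M)`.
-/

open scoped RealInnerProductSpace

section TwoBranch

variable {E : Type*} [NormedAddCommGroup E] [InnerProductSpace ℝ E] {u v w : E}

theorem Orthonormal.inner_smul_add_smul_add_smul (h : Orthonormal ℝ ![u, v, w])
    (a b c a' b' c' : ℝ) :
    ⟪a • u + b • v + c • w, a' • u + b' • v + c' • w⟫ = a * a' + b * b' + c * c' := by
  simpa [Fin.sum_univ_three, add_assoc] using h.inner_sum ![a, b, c] ![a', b', c'] .univ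

theorem Orthonormal.norm_smul_add_smul_add_smul (h : Orthonormal ℝ ![u, v, w]) (a b c : ℝ) :
    ‖a • u + b • v + c • w‖ = √(a ^ 2 + b ^ 2 + c ^ 2) := by
  rw [norm_eq_sqrt_real_inner, h.inner_smul_add_smul_add_smul]
  ring_nf

theorem Orthonormal.swap_last (h : Orthonormal ℝ ![u, v, w]) : Orthonormal ℝ ![u, w, v] := by
  convert h.comp ![0, 2, 1] (by decide) using 1
  ext i
  fin_cases i <;> rfl

variable {a b M : ℝ}

theorem smul_add_smul_add_eq_sqrt_smul (hM : 0 < M) :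
    a • u + b • (v + w) =
      √M • ((a / (2 * √M)) • u + (b / √M) • v + ((a / (2 * √M)) • u + (b / √M) • w)) := by
  have hsM : √M ≠ 0 := (Real.sqrt_pos.mpr hM).ne'
  have ha : √M * (a / (2 * √M)) = a / 2 := by field_simp
  have hb : √M * (b / √M) = b := by field_simp
  simp only [smul_add, smul_smul, ha, hb]
  module

theorem quarter_sq_add_sq_pos (hab : a ^ 2 + 2 * b ^ 2 = 1) : 0 < a ^ 2 / 4 + b ^ 2 := by
  nlinarith [sq_nonneg b]

theorem Orthonormal.norm_smul_add_smul_add (h : Orthonormal ℝ ![u, v, w])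
    (hab : a ^ 2 + 2 * b ^ 2 = 1) : ‖a • u + b • (v + w)‖ = 1 := by
  rw [smul_add, ← add_assoc, h.norm_smul_add_smul_add_smul, Real.sqrt_eq_one]
  linarith

theorem Orthonormal.norm_branch (h : Orthonormal ℝ ![u, v, w]) (hM0 : 0 < M)
    (hM : a ^ 2 / 4 + b ^ 2 = M) : ‖(a / (2 * √M)) • u + (b / √M) • v‖ = 1 := by
  have hnorm := h.norm_smul_add_smul_add_smul (a / (2 * √M)) (b / √M) 0
  rw [zero_smul, add_zero] at hnorm
  rw [hnorm, Real.sqrt_eq_one, div_pow, div_pow, mul_pow, Real.sq_sqrt hM0.le]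
  field_simp
  linarith

theorem Orthonormal.inner_branch_branch (h : Orthonormal ℝ ![u, v, w])
    (hab : a ^ 2 + 2 * b ^ 2 = 1) (hM : a ^ 2 / 4 + b ^ 2 = M) :
    ⟪(a / (2 * √M)) • u + (b / √M) • v, (a / (2 * √M)) • u + (b / √M) • w⟫ =
      1 / (2 * M) - 1 := by
  have hM0 : 0 < M := hM ▸ quarter_sq_add_sq_pos hab
  have hinner :=
    h.inner_smul_add_smul_add_smul (a / (2 * √M)) (b / √M) 0 (a / (2 * √M)) 0 (b / √M)
  simp only [zero_smul, add_zero, zero_mul, mul_zero] at hinner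
  rw [hinner, div_mul_div_comm, mul_mul_mul_comm, Real.mul_self_sqrt hM0.le]
  field_simp
  linarith

theorem Orthonormal.inner_smul_add_smul_add_branch (h : Orthonormal ℝ ![u, v, w])
    (hab : a ^ 2 + 2 * b ^ 2 = 1) :
    ⟪a • u + b • (v + w), (a / (2 * √M)) • u + (b / √M) • v⟫ = 1 / (2 * √M) := by
  have hinner := h.inner_smul_add_smul_add_smul a b b (a / (2 * √M)) (b / √M) 0
  rw [zero_smul, add_zero, add_assoc, ← smul_add] at hinner
  rw [hinner]
  linear_combination hab / (2 * √M)

end TwoBranch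

theorem stmt_12_general (p : ℝ) (ε : ℝ) (hε : ε = 1 ∨ ε = -1) :
    let N : ℝ := 2*p^2 - 2*p + 1
    let M : ℝ := (3*p^2 - 2*p + 1) / (4*N)
    let ν : ℝ := Real.sqrt (N / (3*p^2 - 2*p + 1))
    let e : (Fin 4 → Fin 2) → EuclideanSpace ℝ (Fin 4 → Fin 2) :=
      fun s => EuclideanSpace.single s 1
    let φ : EuclideanSpace ℝ (Fin 4 → Fin 2) :=
      ((1 - p) / Real.sqrt N) • e ![0,0,0,0]
        + (ε * p / Real.sqrt (2*N)) • (e ![0,0,1,1] + e ![1,1,0,0])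
    let φ0 : EuclideanSpace ℝ (Fin 4 → Fin 2) :=
      ((1 - p) / (2 * Real.sqrt (N*M))) • e ![0,0,0,0]
        + (ε * p / Real.sqrt (2*N*M)) • e ![0,0,1,1]
    let φ1 : EuclideanSpace ℝ (Fin 4 → Fin 2) :=
      ((1 - p) / (2 * Real.sqrt (N*M))) • e ![0,0,0,0]
        + (ε * p / Real.sqrt (2*N*M)) • e ![1,1,0,0]
    φ = Real.sqrt M • (φ0 + φ1)
    ∧ ‖φ‖ = 1 ∧ ‖φ0‖ = 1 ∧ ‖φ1‖ = 1
    ∧ ⟪φ0, φ1⟫ = 2 * ν^2 - 1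
    ∧ ⟪φ, φ0⟫ = ν ∧ ⟪φ, φ1⟫ = ν
    ∧ Real.sqrt M = 1 / (2 * ν) := by
  intro N M ν e φ φ0 φ1
  have hN : 0 < N := by nlinarith [sq_nonneg (2 * p - 1)]
  have hO : Orthonormal ℝ ![e ![0,0,0,0], e ![0,0,1,1], e ![1,1,0,0]] := by
    have hcomp : ![e ![0,0,0,0], e ![0,0,1,1], e ![1,1,0,0]] =
        (fun s => EuclideanSpace.single s 1) ∘ ![![0,0,0,0], ![0,0,1,1], ![1,1,0,0]] := by
      ext i : 1
      fin_cases i <;> rfl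
    rw [hcomp]
    exact EuclideanSpace.orthonormal_single.comp _ (by decide)
  have hα : (1 - p) / (2 * √(N * M)) = (1 - p) / √N / (2 * √M) := by
    rw [Real.sqrt_mul hN.le, div_div, mul_left_comm]
  have hβ : ε * p / √(2 * N * M) = ε * p / √(2 * N) / √M := by
    rw [Real.sqrt_mul (by positivity), div_div]
  set a := (1 - p) / √N
  set b := ε * p / √(2 * N)
  have ha2 : a ^ 2 = (1 - p) ^ 2 / N := by rw [div_pow, Real.sq_sqrt hN.le]
  have hb2 : b ^ 2 = p ^ 2 / (2 * N) := by
    have hε2 : ε ^ 2 = 1 := by rcases hε with rfl | rfl <;> norm_num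
    rw [div_pow, mul_pow, hε2, one_mul, Real.sq_sqrt (by positivity)]
  have hab : a ^ 2 + 2 * b ^ 2 = 1 := by
    rw [ha2, hb2]
    field_simp
    ring
  have hM : a ^ 2 / 4 + b ^ 2 = M := by
    rw [ha2, hb2]
    simp only [M]
    field_simp
    ring
  have hM0 : 0 < M := hM ▸ quarter_sq_add_sq_pos hab
  have hν : ν = 1 / (2 * √M) := by
    simp only [ν]
    rw [← Real.sqrt_sq (by positivity : 0 ≤ 1 / (2 * √M)), div_pow, mul_pow,
      Real.sq_sqrt hM0.le]
    congr 1
    simp only [M]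
    field_simp
    ring
  simp only [φ, φ0, φ1, hα, hβ, hν]
  refine ⟨smul_add_smul_add_eq_sqrt_smul hM0, hO.norm_smul_add_smul_add hab,
    hO.norm_branch hM0 hM, hO.swap_last.norm_branch hM0 hM, ?_,
    hO.inner_smul_add_smul_add_branch hab, ?_, by field_simp⟩
  · rw [hO.inner_branch_branch hab hM, div_pow, mul_pow, Real.sq_sqrt hM0.le]
    field_simp
  · rw [add_comm (e _) (e _)]
    exact hO.swap_last.inner_smul_add_smul_add_branch hab

theorem stmt_12 (p : ℝ) (hp0 : 0 < p) (hp1 : p < 1) (ε : ℝ) (hε : ε = 1 ∨ ε = -1) :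
    let N : ℝ := 2*p^2 - 2*p + 1
    let M : ℝ := (3*p^2 - 2*p + 1) / (4*N)
    let ν : ℝ := Real.sqrt (N / (3*p^2 - 2*p + 1))
    let e : (Fin 4 → Fin 2) → EuclideanSpace ℝ (Fin 4 → Fin 2) :=
      fun s => EuclideanSpace.single s 1
    let φ : EuclideanSpace ℝ (Fin 4 → Fin 2) :=
      ((1 - p) / Real.sqrt N) • e ![0,0,0,0]
        + (ε * p / Real.sqrt (2*N)) • (e ![0,0,1,1] + e ![1,1,0,0])
    let φ0 : EuclideanSpace ℝ (Fin 4 → Fin 2) :=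
      ((1 - p) / (2 * Real.sqrt (N*M))) • e ![0,0,0,0]
        + (ε * p / Real.sqrt (2*N*M)) • e ![0,0,1,1]
    let φ1 : EuclideanSpace ℝ (Fin 4 → Fin 2) :=
      ((1 - p) / (2 * Real.sqrt (N*M))) • e ![0,0,0,0]
        + (ε * p / Real.sqrt (2*N*M)) • e ![1,1,0,0]
    φ = Real.sqrt M • (φ0 + φ1)
    ∧ ‖φ‖ = 1 ∧ ‖φ0‖ = 1 ∧ ‖φ1‖ = 1
    ∧ ⟪φ0, φ1⟫ = 2 * ν^2 - 1
    ∧ ⟪φ, φ0⟫ = ν ∧ ⟪φ, φ1⟫ = ν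
    ∧ Real.sqrt M = 1 / (2 * ν) :=
  stmt_12_general p ε hε
end

section
/- Let 0 ≤ p ≤ 1 and set η := 1 − 2p, C₊ := (√(1 + η⁴) + √(1 − η⁴))/2, C₋ := (√(1 + η⁴) − √(1 − η⁴))/2, D := η²/√2, E := 1 + η⁴, and ν := 1/√E. In the real inner product space of functions (Fin 4 → Fin 2) → ℝ with the standard dot product, let e_s denote the standard basis vector at the string s, and define ω₊ := C₊·e_{0011} + C₋·e_{1100}, ω₋ := C₋·e_{0011} + C₊·e_{1100}, and for j ∈ {0,1}: ω₊ʲ := (1/√E)·(C₊·e_{0011} + C₋·e_{1100} + (−1)ʲ·D·e_{0000} + (−1)ʲ·D·e_{1111}), and ω₋ʲ defined the same way with C₊ and C₋ interchanged. Then for each sign ε ∈ {+, −}: (i) ‖ω_ε‖ = ‖ω_ε⁰‖ = ‖ω_ε¹‖ = 1; (ii) ω_ε = (1/(2ν))·(ω_ε⁰ + ω_ε¹); (iii) ⟪ω_ε⁰, ω_ε¹⟫ = 2ν² − 1; and (iv) ⟪ω_ε, ω_ε⁰⟫ = ⟪ω_ε, ω_ε¹⟫ = ν. -/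
open scoped RealInnerProductSpace

/-!
Put `u := ω_ε` and `w := D • (e_{0000} + e_{1111})`. Then `ω_εʲ = ν • (u ± w)`, where `u` is a unit
vector orthogonal to `w` and `ν⁻² = 1 + ‖w‖² = E`, so every claim is a fact about the symmetric
pair `ν • (u ± w)`. The explicit coefficients enter only through `C₊² + C₋² = 1` and `2 D² = η⁴`.
-/

theorem smul_add_add_smul_sub {R M : Type*} [Field R] [CharZero R] [AddCommGroup M] [Module R M]
    {ν : R} (hν : ν ≠ 0) (u w : M) :
    (1 / (2 * ν)) • (ν • (u + w) + ν • (u - w)) = u := by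
  rw [← smul_add, add_add_sub_cancel, ← two_smul R u, smul_smul, smul_smul]
  field_simp
  exact one_smul R u

section SymmetricPair

variable {F : Type*} [NormedAddCommGroup F] [InnerProductSpace ℝ F] {u w : F} {ν : ℝ}

theorem norm_smul_add_eq_one (hu : ‖u‖ = 1) (huw : ⟪u, w⟫ = 0)
    (hν : ν ^ 2 * (1 + ‖w‖ ^ 2) = 1) : ‖ν • (u + w)‖ = 1 := by
  rw [← pow_eq_one_iff_of_nonneg (norm_nonneg _) two_ne_zero, norm_smul, mul_pow,
    Real.norm_eq_abs, sq_abs, pow_two ‖u + w‖, norm_add_sq_eq_norm_sq_add_norm_sq_real huw, hu]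
  linear_combination hν

theorem norm_smul_sub_eq_one (hu : ‖u‖ = 1) (huw : ⟪u, w⟫ = 0)
    (hν : ν ^ 2 * (1 + ‖w‖ ^ 2) = 1) : ‖ν • (u - w)‖ = 1 := by
  rw [← pow_eq_one_iff_of_nonneg (norm_nonneg _) two_ne_zero, norm_smul, mul_pow,
    Real.norm_eq_abs, sq_abs, pow_two ‖u - w‖, norm_sub_sq_eq_norm_sq_add_norm_sq_real huw, hu]
  linear_combination hν

theorem inner_smul_add_smul_sub (hu : ‖u‖ = 1) (hν : ν ^ 2 * (1 + ‖w‖ ^ 2) = 1) :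
    ⟪ν • (u + w), ν • (u - w)⟫ = 2 * ν ^ 2 - 1 := by
  rw [real_inner_smul_left, real_inner_smul_right, inner_add_left, inner_sub_right,
    inner_sub_right, real_inner_self_eq_norm_sq, real_inner_self_eq_norm_sq, real_inner_comm u w,
    hu]
  linear_combination -hν

theorem inner_smul_add_right_eq (hu : ‖u‖ = 1) (huw : ⟪u, w⟫ = 0) :
    ⟪u, ν • (u + w)⟫ = ν := by
  rw [real_inner_smul_right, inner_add_right, real_inner_self_eq_norm_sq, hu, huw]
  ring

theorem inner_smul_sub_right_eq (hu : ‖u‖ = 1) (huw : ⟪u, w⟫ = 0) :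
    ⟪u, ν • (u - w)⟫ = ν := by
  rw [real_inner_smul_right, inner_sub_right, real_inner_self_eq_norm_sq, hu, huw]
  ring

end SymmetricPair

namespace Orthonormal

variable {ι F : Type*} [NormedAddCommGroup F] [InnerProductSpace ℝ F] {v : ι → F}

theorem norm_smul_add_smul_sq (hv : Orthonormal ℝ v) {i j : ι} (hij : i ≠ j) (a b : ℝ) :
    ‖a • v i + b • v j‖ ^ 2 = a ^ 2 + b ^ 2 := by
  rw [← real_inner_self_eq_norm_sq]
  simp only [inner_add_left, inner_add_right, real_inner_smul_left, real_inner_smul_right,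
    real_inner_self_eq_norm_sq, norm_smul, mul_pow, Real.norm_eq_abs, sq_abs, hv.1 i, hv.1 j,
    hv.2 hij, hv.2 hij.symm]
  ring

theorem inner_smul_add_smul_eq_zero (hv : Orthonormal ℝ v) {i j k l : ι} (hik : i ≠ k)
    (hil : i ≠ l) (hjk : j ≠ k) (hjl : j ≠ l) (a b c d : ℝ) :
    ⟪a • v i + b • v j, c • v k + d • v l⟫ = 0 := by
  simp only [inner_add_left, inner_add_right, real_inner_smul_left, real_inner_smul_right,
    hv.2 hik, hv.2 hil, hv.2 hjk, hv.2 hjl]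
  ring

end Orthonormal

theorem half_sqrt_add_sq_add_half_sqrt_sub_sq {x : ℝ} (h₁ : -1 ≤ x) (h₂ : x ≤ 1) :
    ((√(1 + x) + √(1 - x)) / 2) ^ 2 + ((√(1 + x) - √(1 - x)) / 2) ^ 2 = 1 := by
  have hp := Real.sq_sqrt (show 0 ≤ 1 + x by linarith)
  have hm := Real.sq_sqrt (show 0 ≤ 1 - x by linarith)
  linear_combination hp / 2 + hm / 2

theorem stmt_13 (p : ℝ) (hp0 : 0 ≤ p) (hp1 : p ≤ 1) (ε : Bool) :
    let η : ℝ := 1 - 2*p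
    let Cp : ℝ := (Real.sqrt (1 + η^4) + Real.sqrt (1 - η^4)) / 2
    let Cm : ℝ := (Real.sqrt (1 + η^4) - Real.sqrt (1 - η^4)) / 2
    let D : ℝ := η^2 / Real.sqrt 2
    let E : ℝ := 1 + η^4
    let ν : ℝ := 1 / Real.sqrt E
    let e : (Fin 4 → Fin 2) → EuclideanSpace ℝ (Fin 4 → Fin 2) :=
      fun s => EuclideanSpace.single s 1
    -- `C₁` is the coefficient of `e_{0011}` and `C₂` that of `e_{1100}`;
    -- for the sign `ε = +` these are `C₊, C₋`, and for `ε = −` they are interchanged.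
    let C₁ : ℝ := if ε then Cp else Cm
    let C₂ : ℝ := if ε then Cm else Cp
    let ω : EuclideanSpace ℝ (Fin 4 → Fin 2) := C₁ • e ![0,0,1,1] + C₂ • e ![1,1,0,0]
    let ω0 : EuclideanSpace ℝ (Fin 4 → Fin 2) :=
      (1 / Real.sqrt E) • (C₁ • e ![0,0,1,1] + C₂ • e ![1,1,0,0]
        + D • e ![0,0,0,0] + D • e ![1,1,1,1])
    let ω1 : EuclideanSpace ℝ (Fin 4 → Fin 2) :=
      (1 / Real.sqrt E) • (C₁ • e ![0,0,1,1] + C₂ • e ![1,1,0,0]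
        - D • e ![0,0,0,0] - D • e ![1,1,1,1])
    ‖ω‖ = 1 ∧ ‖ω0‖ = 1 ∧ ‖ω1‖ = 1
    ∧ ω = (1 / (2 * ν)) • (ω0 + ω1)
    ∧ ⟪ω0, ω1⟫ = 2 * ν^2 - 1
    ∧ ⟪ω, ω0⟫ = ν ∧ ⟪ω, ω1⟫ = ν := by
  intro η Cp Cm D E ν e C₁ C₂ ω ω0 ω1
  have hη4 : η ^ 4 ≤ 1 := by
    have : η ^ 2 ≤ 1 := by nlinarith
    nlinarith
  have he : Orthonormal ℝ e := EuclideanSpace.orthonormal_single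
  set w := D • e ![0,0,0,0] + D • e ![1,1,1,1]
  have hC : C₁ ^ 2 + C₂ ^ 2 = 1 := by
    have h := half_sqrt_add_sq_add_half_sqrt_sub_sq (by linarith [show 0 ≤ η ^ 4 by positivity]) hη4
    cases ε
    · exact (add_comm _ _).trans h
    · exact h
  have hu : ‖ω‖ = 1 := by
    rw [← pow_eq_one_iff_of_nonneg (norm_nonneg _) two_ne_zero,
      he.norm_smul_add_smul_sq (by decide), hC]
  have huw : ⟪ω, w⟫ = 0 :=
    he.inner_smul_add_smul_eq_zero (by decide) (by decide) (by decide) (by decide) _ _ _ _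
  have hν : ν ^ 2 * (1 + ‖w‖ ^ 2) = 1 := by
    have hE : E ≠ 0 := by positivity
    rw [he.norm_smul_add_smul_sq (by decide)]
    simp only [ν, D, div_pow, Real.sq_sqrt (show (0:ℝ) ≤ 2 by norm_num),
      Real.sq_sqrt (show 0 ≤ E by positivity)]
    field_simp
    ring
  have hν₀ : ν ≠ 0 := (pow_ne_zero_iff two_ne_zero).1 (left_ne_zero_of_mul_eq_one hν)
  have h0 : ω0 = ν • (ω + w) := by simp only [ω0, ω, w, ν, add_assoc]
  have h1 : ω1 = ν • (ω - w) := by simp only [ω1, ω, w, ν, sub_sub]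
  rw [h0, h1]
  exact ⟨hu, norm_smul_add_eq_one hu huw hν, norm_smul_sub_eq_one hu huw hν,
    (smul_add_add_smul_sub hν₀ ω w).symm, inner_smul_add_smul_sub hu hν,
    inner_smul_add_right_eq hu huw, inner_smul_sub_right_eq hu huw⟩
end

section
/- Work in Matrix (Fin 4) (Fin 4) ℂ, with the basis indexed by two-mode occupation numbers in the order |00⟩, |01⟩, |10⟩, |11⟩ (indices 0,1,2,3). Let A be the matrix with A 0 3 = A 3 0 = −1 and all other entries 0, and let N₁ be the diagonal matrix diag(0, 0, 1, 1). Then: (i) for every real θ, Matrix.exp(Complex.I·θ • A) applied to the standard basis vector e₀ equals cos θ • e₀ − (Complex.I · sin θ) • e₃; and (ii) for all complex numbers α, β with |α|² + |β|² = 1 there exist real numbers γ, φ, θ such that Complex.exp(Complex.I·γ) • ((Matrix.exp(Complex.I·φ • N₁) * Matrix.exp(Complex.I·θ • A)) applied to e₀) = α • e₀ + β • e₃. Hence every two-mode even state α|00⟩ + β|11⟩ is, up to a global phase, obtained from |00⟩ by the unitaries exp(iφ a₁†a₁) and exp(iθ(a₁a₂ + a₂†a₁†)). -/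
open Matrix

/-- The matrix of the quadratic fermionic operator `a₁a₂ + a₂†a₁†` in the two-mode
occupation basis `|00⟩, |01⟩, |10⟩, |11⟩` (with `a₂†a₁†|00⟩ = −|11⟩`). -/
noncomputable def Aop : Matrix (Fin 4) (Fin 4) ℂ :=
  !![0, 0, 0, -1;
     0, 0, 0, 0;
     0, 0, 0, 0;
     -1, 0, 0, 0]

/-- The matrix of the number operator `a₁†a₁` of the first mode. -/
noncomputable def N1op : Matrix (Fin 4) (Fin 4) ℂ :=
  !![0, 0, 0, 0;
     0, 0, 0, 0;
     0, 0, 1, 0;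
     0, 0, 0, 1]

/-- The basis vector `|00⟩`. -/
noncomputable def e0 : Fin 4 → ℂ := Pi.single 0 1

/-- The basis vector `|11⟩`. -/
noncomputable def e3 : Fin 4 → ℂ := Pi.single 3 1

/-!
Both operators are diagonalised by explicit eigenvectors: `N₁` has eigenvalues `0` on `|00⟩` and
`1` on `|11⟩`, while `A` has eigenvalues `∓1` on `|00⟩ ± |11⟩`. Since `exp M v = exp c • v` for an
eigenvector `v` of `M` with eigenvalue `c`, writing `|00⟩` as the average of `|00⟩ ± |11⟩` gives
`exp (iθA)|00⟩ = cos θ |00⟩ - i sin θ |11⟩`, and `exp (iφN₁)` then rotates the phase of the second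
component. An arbitrary `α|00⟩ + β|11⟩` is reached by taking `cos θ = ‖α‖`, `sin θ = ‖β‖` and fixing
the two phases with `γ` and `φ`.
-/

open NormedSpace

theorem NormedSpace.exp_mul_of_mul_eq_smul {𝕂 𝔸 : Type*} [RCLike 𝕂] [NormedRing 𝔸]
    [NormedAlgebra 𝕂 𝔸] [CompleteSpace 𝔸] {a x : 𝔸} {c : 𝕂} (h : a * x = c • x) :
    exp a * x = exp c • x := by
  let : NormedAlgebra ℚ 𝔸 := NormedAlgebra.restrictScalars ℚ 𝕂 𝔸
  have hsemi : SemiconjBy x (algebraMap 𝕂 𝔸 c) a := by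
    rw [SemiconjBy, h, ← Algebra.commutes, Algebra.smul_def]
  rw [← hsemi.exp_right, ← algebraMap_exp_comm, ← Algebra.commutes, Algebra.smul_def]

theorem Matrix.exp_mulVec_of_mulVec_eq_smul {𝕂 n : Type*} [RCLike 𝕂] [Fintype n] [DecidableEq n]
    {M : Matrix n n 𝕂} {v : n → 𝕂} {c : 𝕂} (h : M *ᵥ v = c • v) :
    exp M *ᵥ v = exp c • v := by
  let V : Matrix n n 𝕂 := of fun i _ => v i
  have hV (N : Matrix n n 𝕂) : N * V = of fun i _ => (N *ᵥ v) i := by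
    ext i j
    simp [V, mul_apply, mulVec, dotProduct]
  have key : exp M * V = exp c • V := by
    open scoped Norms.Operator in exact exp_mul_of_mul_eq_smul (by rw [hV, h]; ext; simp [V])
  ext i
  simpa [hV, V] using congrFun (congrFun key i) i

lemma Aop_mulVec_e0_add_e3 : Aop *ᵥ (e0 + e3) = (-1 : ℂ) • (e0 + e3) := by
  ext i; fin_cases i <;> simp [Aop, e0, e3, mulVec, dotProduct, Fin.sum_univ_four]

lemma Aop_mulVec_e0_sub_e3 : Aop *ᵥ (e0 - e3) = (1 : ℂ) • (e0 - e3) := by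
  ext i; fin_cases i <;> simp [Aop, e0, e3, mulVec, dotProduct, Fin.sum_univ_four]

lemma N1op_mulVec_e0 : N1op *ᵥ e0 = (0 : ℂ) • e0 := by
  ext i; fin_cases i <;> simp [N1op, e0, mulVec, dotProduct, Fin.sum_univ_four]

lemma N1op_mulVec_e3 : N1op *ᵥ e3 = (1 : ℂ) • e3 := by
  ext i; fin_cases i <;> simp [N1op, e3, mulVec, dotProduct, Fin.sum_univ_four]

lemma exp_smul_Aop_mulVec_e0 (θ : ℝ) :
    exp ((Complex.I * θ) • Aop) *ᵥ e0 = (Real.cos θ : ℂ) • e0 - (Complex.I * Real.sin θ) • e3 := by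
  have hplus := exp_mulVec_of_mulVec_eq_smul (M := (Complex.I * θ) • Aop)
    (by rw [smul_mulVec, Aop_mulVec_e0_add_e3, smul_smul])
  have hminus := exp_mulVec_of_mulVec_eq_smul (M := (Complex.I * θ) • Aop)
    (by rw [smul_mulVec, Aop_mulVec_e0_sub_e3, smul_smul])
  have he0 : e0 = (1 / 2 : ℂ) • ((e0 + e3) + (e0 - e3)) := by
    ext i; simp; ring
  conv_lhs => rw [he0, mulVec_smul, mulVec_add, hplus, hminus]
  rw [← Complex.exp_eq_exp_ℂ, Complex.ofReal_cos, Complex.ofReal_sin, Complex.cos, Complex.sin]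
  ext i
  simp
  ring_nf
  simp only [Complex.I_sq]
  ring

lemma exp_smul_N1op_mulVec_e0 (φ : ℝ) : exp ((Complex.I * φ) • N1op) *ᵥ e0 = e0 := by
  have h := exp_mulVec_of_mulVec_eq_smul (M := (Complex.I * φ) • N1op)
    (by rw [smul_mulVec, N1op_mulVec_e0, smul_smul, mul_zero])
  rwa [← Complex.exp_eq_exp_ℂ, Complex.exp_zero, one_smul] at h

lemma exp_smul_N1op_mulVec_e3 (φ : ℝ) :
    exp ((Complex.I * φ) • N1op) *ᵥ e3 = Complex.exp (Complex.I * φ) • e3 := by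
  rw [Complex.exp_eq_exp_ℂ]
  exact exp_mulVec_of_mulVec_eq_smul (by rw [smul_mulVec, N1op_mulVec_e3, smul_smul, mul_one])

lemma exp_smul_N1op_mul_exp_smul_Aop_mulVec_e0 (φ θ : ℝ) :
    (exp ((Complex.I * φ) • N1op) * exp ((Complex.I * θ) • Aop)) *ᵥ e0
      = (Real.cos θ : ℂ) • e0 - (Complex.I * Real.sin θ * Complex.exp (Complex.I * φ)) • e3 := by
  rw [← mulVec_mulVec, exp_smul_Aop_mulVec_e0, mulVec_sub, mulVec_smul, mulVec_smul,
    exp_smul_N1op_mulVec_e0, exp_smul_N1op_mulVec_e3, smul_smul]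

lemma Real.exists_cos_eq_sin_eq {x y : ℝ} (h : x ^ 2 + y ^ 2 = 1) (hy : 0 ≤ y) :
    ∃ θ, Real.cos θ = x ∧ Real.sin θ = y := by
  have hx : -1 ≤ x ∧ x ≤ 1 := by constructor <;> nlinarith
  refine ⟨Real.arccos x, Real.cos_arccos hx.1 hx.2, ?_⟩
  rw [Real.sin_arccos, ← h, add_sub_cancel_left, Real.sqrt_sq hy]

theorem stmt_14 :
    (∀ θ : ℝ,
      (NormedSpace.exp ((Complex.I * (θ : ℂ)) • Aop)).mulVec e0
        = ((Real.cos θ : ℂ)) • e0 - (Complex.I * (Real.sin θ : ℂ)) • e3)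
    ∧ (∀ α β : ℂ, ‖α‖ ^ 2 + ‖β‖ ^ 2 = 1 →
        ∃ γ φ θ : ℝ,
          Complex.exp (Complex.I * (γ : ℂ)) •
            ((NormedSpace.exp ((Complex.I * (φ : ℂ)) • N1op)
              * NormedSpace.exp ((Complex.I * (θ : ℂ)) • Aop)).mulVec e0)
          = α • e0 + β • e3) := by
  refine ⟨exp_smul_Aop_mulVec_e0, fun α β h => ?_⟩
  obtain ⟨θ, hcos, hsin⟩ := Real.exists_cos_eq_sin_eq h (norm_nonneg β)
  refine ⟨α.arg, β.arg - α.arg + Real.pi / 2, θ, ?_⟩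
  have hα : Complex.exp (Complex.I * α.arg) * ‖α‖ = α := by
    rw [mul_comm, mul_comm Complex.I]; exact Complex.norm_mul_exp_arg_mul_I α
  have hβ := Complex.norm_mul_exp_arg_mul_I β
  -- the extra `π / 2` turns the factor `-i` of `exp (iθA)|00⟩` into `1`
  have hphase : Complex.exp (Complex.I * α.arg)
      * Complex.exp (Complex.I * ↑(β.arg - α.arg + Real.pi / 2))
      = Complex.exp (β.arg * Complex.I) * Complex.I := by
    conv_rhs => arg 2; rw [← Complex.exp_pi_div_two_mul_I]
    rw [← Complex.exp_add, ← Complex.exp_add]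
    congr 1
    push_cast
    ring
  rw [exp_smul_N1op_mul_exp_smul_Aop_mulVec_e0, smul_sub, smul_smul, smul_smul, sub_eq_add_neg,
    ← neg_smul, hcos, hsin, hα]
  congr 2
  linear_combination (-(Complex.I * ‖β‖)) * hphase
    - ‖β‖ * Complex.exp (β.arg * Complex.I) * Complex.I_sq + hβ
end

section
/- Let p and a be real numbers with 0 < p ≤ a < 1. Then the Kullback–Leibler divergence satisfies D(a ‖ p) = a·log(a/p) + (1−a)·log((1−a)/(1−p)) ≥ (a − p)² / (2a). -/
/-!
Gibbs' inequality `log y ≥ 1 - 1/y` bounds the second summand of `D(a ‖ p)` below by `p - a`.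
For the first, with `u = 1 - p/a ∈ [0, 1)` we have `log (a/p) = -log (1 - u) = ∑ uᵏ/k ≥ u + u²/2`,
so `a log (a/p) ≥ (a - p) + (a - p)²/(2a)`; adding the two bounds gives the claim.
-/

open Real

theorem add_sq_div_two_le_neg_log_one_sub {u : ℝ} (hu₀ : 0 ≤ u) (hu₁ : u < 1) :
    u + u ^ 2 / 2 ≤ -log (1 - u) := by
  have hsum := hasSum_pow_div_log_of_abs_lt_one (by rwa [abs_of_nonneg hu₀])
  simpa [Finset.sum_range_succ, one_add_one_eq_two] using
    sum_le_hasSum (Finset.range 2) (fun n _ ↦ by positivity) hsum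

theorem sub_le_mul_log_div {x y : ℝ} (hx : 0 < x) (hy : 0 < y) :
    x - y ≤ x * log (x / y) := by
  have := mul_le_mul_of_nonneg_left (one_sub_inv_le_log_of_pos (div_pos hx hy)) hx.le
  rwa [inv_div, mul_sub, mul_one, mul_div_cancel₀ _ hx.ne'] at this

theorem sub_add_sq_div_le_mul_log_div {p a : ℝ} (hp : 0 < p) (hpa : p ≤ a) :
    (a - p) + (a - p) ^ 2 / (2 * a) ≤ a * log (a / p) := by
  have ha : 0 < a := hp.trans_le hpa
  set u := (a - p) / a with hu
  have hu₀ : 0 ≤ u := div_nonneg (sub_nonneg.2 hpa) ha.le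
  have hu₁ : u < 1 := (div_lt_one ha).2 (by linarith)
  have hlog : log (a / p) = -log (1 - u) := by
    rw [← log_inv, hu, one_sub_div ha.ne', sub_sub_cancel, inv_div]
  have hlhs : (a - p) + (a - p) ^ 2 / (2 * a) = a * (u + u ^ 2 / 2) := by
    rw [hu]
    field_simp
  rw [hlog, hlhs]
  exact mul_le_mul_of_nonneg_left (add_sq_div_two_le_neg_log_one_sub hu₀ hu₁) ha.le

theorem stmt_15 (p a : ℝ) (hp : 0 < p) (hpa : p ≤ a) (ha : a < 1) :
    (a - p) ^ 2 / (2 * a)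
      ≤ a * Real.log (a / p) + (1 - a) * Real.log ((1 - a) / (1 - p)) := by
  have hfirst := sub_add_sq_div_le_mul_log_div hp hpa
  have hsecond := sub_le_mul_log_div (x := 1 - a) (y := 1 - p) (by linarith) (by linarith)
  linarith
end
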